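/- arXiv:2102.03269 — 3 statements merged into one kernel-verified Lean document; each statement's English description precedes it below -/
import Mathlib

section
/- Correctness of the atomic decomposition: for a basic graph pattern P = tp_1 AND ... AND tp_n over a federation F = (C, int, ep) in which every service can evaluate triple patterns, the join over i of (⋃_{c∈C} ⟦tp_i⟧_{ep(c)}) equals ⟦P⟧_G where G = ⋃_{c∈C} ep(c). In symbols: ⋈_{i=1..n} (⋃_{c∈C} ⟦tp_i⟧_{ep(c)}) = ⟦tp_1⟧_G ⋈ ... ⋈ ⟦tp_n⟧_G. -/
/-- A solution mapping: a partial function from variables to RDF terms. -/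
abbrev Mapping (V T : Type) := V → Option T

/-- Two mappings are compatible if they agree on shared variables. -/
def compatible {V T : Type} (μ₁ μ₂ : Mapping V T) : Prop :=
  ∀ v a b, μ₁ v = some a → μ₂ v = some b → a = b

/-- Union of two mappings (left-biased; equals symmetric union on compatible mappings). -/
def munion {V T : Type} (μ₁ μ₂ : Mapping V T) : Mapping V T :=
  fun v => (μ₁ v).or (μ₂ v)

/-- Join of two sets of solution mappings. -/
def joinSet {V T : Type} (Ω₁ Ω₂ : Set (Mapping V T)) : Set (Mapping V T) :=
  {μ | ∃ μ₁ ∈ Ω₁, ∃ μ₂ ∈ Ω₂, compatible μ₁ μ₂ ∧ μ = munion μ₁ μ₂}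

/-- An RDF graph is a set of triples over terms. -/
abbrev RDFGraph (T : Type) := Set (T × T × T)

/-- A triple pattern: a triple over variables-or-terms. -/
structure TP (V T : Type) where
  s : V ⊕ T
  p : V ⊕ T
  o : V ⊕ T

/-- Apply a mapping to a pattern component. -/
def applyC {V T : Type} (μ : Mapping V T) : V ⊕ T → Option T
  | Sum.inl v => μ v
  | Sum.inr t => some t

/-- The variable `v` occurs in the triple pattern `t`. -/
def varIn {V T : Type} (v : V) (t : TP V T) : Prop :=
  t.s = Sum.inl v ∨ t.p = Sum.inl v ∨ t.o = Sum.inl v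

/-- The mapping `μ` instantiates pattern `t` to some triple of `G`. -/
def matchesTP {V T : Type} (μ : Mapping V T) (t : TP V T) (G : RDFGraph T) : Prop :=
  ∃ tr ∈ G, applyC μ t.s = some tr.1 ∧ applyC μ t.p = some tr.2.1 ∧
    applyC μ t.o = some tr.2.2

/-- Evaluation ⟦tp⟧_G: mappings with domain vars(tp) instantiating tp to a triple of G. -/
def evalTP {V T : Type} (t : TP V T) (G : RDFGraph T) : Set (Mapping V T) :=
  {μ | (∀ v, (μ v).isSome ↔ varIn v t) ∧ matchesTP μ t G}

/-- The empty solution mapping (identity of the join). -/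
def emptyMap {V T : Type} : Mapping V T := fun _ => none

/-- Join of a list of sets of solution mappings. -/
def joinList {V T : Type} (l : List (Set (Mapping V T))) : Set (Mapping V T) :=
  l.foldr joinSet {emptyMap}

/-- Evaluation of a BGP (given by the triple patterns with indices in `A`) over a graph:
the join of the individual triple-pattern evaluations, characterized directly. -/
def evalBGP {V T : Type} {n : ℕ} (tp : Fin n → TP V T) (A : Finset (Fin n))
    (G : RDFGraph T) : Set (Mapping V T) :=
  {μ | (∀ v, (μ v).isSome ↔ ∃ i ∈ A, varIn v (tp i)) ∧ ∀ i ∈ A, matchesTP μ (tp i) G}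

theorem matchesTP_iUnion {V T : Type} {ι : Sort*} (μ : Mapping V T) (t : TP V T)
    (G : ι → RDFGraph T) :
    matchesTP μ t (⋃ i, G i) ↔ ∃ i, matchesTP μ t (G i) := by
  simp only [matchesTP, Set.mem_iUnion]
  constructor
  · rintro ⟨tr, ⟨i, htr⟩, hμ⟩
    exact ⟨i, tr, htr, hμ⟩
  · rintro ⟨i, tr, htr, hμ⟩
    exact ⟨tr, ⟨i, htr⟩, hμ⟩

theorem evalTP_iUnion {V T : Type} {ι : Sort*} (t : TP V T) (G : ι → RDFGraph T) :
    evalTP t (⋃ i, G i) = ⋃ i, evalTP t (G i) := by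
  ext μ
  simp only [evalTP, Set.mem_ofPred_eq, Set.mem_iUnion, matchesTP_iUnion, exists_and_left]

/-- Correctness of the atomic decomposition: for a BGP tp_1 AND ... AND tp_n over a
federation in which every service can evaluate triple patterns, the join over i of
(⋃_{c∈C} ⟦tp_i⟧_{ep(c)}) equals ⟦tp_1⟧_G ⋈ ... ⋈ ⟦tp_n⟧_G with G = ⋃_{c∈C} ep(c). -/
theorem atomic_decomposition_correct {V T S : Type} (C : Finset S) (ep : S → RDFGraph T)
    (tps : List (TP V T)) :
    joinList (tps.map (fun t => ⋃ c ∈ C, evalTP t (ep c))) =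
      joinList (tps.map (fun t => evalTP t (⋃ c ∈ C, ep c))) := by
  simp only [evalTP_iUnion]
end

section
/- The join of solution-mapping sets is associative and commutative: Ω1 ⋈ (Ω2 ⋈ Ω3) = (Ω1 ⋈ Ω2) ⋈ Ω3 and Ω1 ⋈ Ω2 = Ω2 ⋈ Ω1. -/
section Mapping

variable {V T : Type} {μ₁ μ₂ μ₃ : Mapping V T}

theorem munion_apply_eq_some_iff {v : V} {a : T} :
    munion μ₁ μ₂ v = some a ↔ μ₁ v = some a ∨ μ₁ v = none ∧ μ₂ v = some a :=
  Option.or_eq_some_iff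

theorem munion_apply_of_left {v : V} {a : T} (h : μ₁ v = some a) :
    munion μ₁ μ₂ v = some a := by
  simp only [munion, h, Option.some_or]

theorem munion_assoc (μ₁ μ₂ μ₃ : Mapping V T) :
    munion (munion μ₁ μ₂) μ₃ = munion μ₁ (munion μ₂ μ₃) :=
  funext fun _ => Option.or_assoc

theorem compatible.symm (h : compatible μ₁ μ₂) : compatible μ₂ μ₁ :=
  fun v a b h₂ h₁ => (h v b a h₁ h₂).symm

theorem compatible_comm : compatible μ₁ μ₂ ↔ compatible μ₂ μ₁ :=
  ⟨compatible.symm, compatible.symm⟩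

theorem compatible.munion_apply_of_right (h : compatible μ₁ μ₂) {v : V} {a : T}
    (h₂ : μ₂ v = some a) : munion μ₁ μ₂ v = some a := by
  cases h₁ : μ₁ v with
  | none => simp only [munion, h₁, h₂, Option.none_or]
  | some b => simp only [munion, h₁, Option.some_or, h v b a h₁ h₂]

theorem compatible.munion_comm (h : compatible μ₁ μ₂) : munion μ₁ μ₂ = munion μ₂ μ₁ := by
  funext v
  cases h₂ : μ₂ v with
  | none => cases h₁ : μ₁ v <;> simp only [munion, h₁, h₂, Option.none_or, Option.or_none]
  | some a => rw [h.munion_apply_of_right h₂, munion_apply_of_left h₂]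

theorem compatible_munion_left_iff (h : compatible μ₁ μ₂) :
    compatible (munion μ₁ μ₂) μ₃ ↔ compatible μ₁ μ₃ ∧ compatible μ₂ μ₃ := by
  refine ⟨fun h₁₂₃ => ⟨?_, ?_⟩, fun ⟨h₁₃, h₂₃⟩ v a b ha hb => ?_⟩
  · exact fun v a b ha hb => h₁₂₃ v a b (munion_apply_of_left ha) hb
  · exact fun v a b ha hb => h₁₂₃ v a b (h.munion_apply_of_right ha) hb
  · rcases munion_apply_eq_some_iff.mp ha with ha₁ | ⟨-, ha₂⟩
    · exact h₁₃ v a b ha₁ hb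
    · exact h₂₃ v a b ha₂ hb

theorem compatible_munion_right_iff (h : compatible μ₂ μ₃) :
    compatible μ₁ (munion μ₂ μ₃) ↔ compatible μ₁ μ₂ ∧ compatible μ₁ μ₃ := by
  rw [compatible_comm, compatible_munion_left_iff h, compatible_comm (μ₁ := μ₂),
    compatible_comm (μ₁ := μ₃)]

end Mapping

section Join

variable {V T : Type}

theorem joinSet_comm (Ω₁ Ω₂ : Set (Mapping V T)) : joinSet Ω₁ Ω₂ = joinSet Ω₂ Ω₁ := by
  have key : ∀ Ω Ω' : Set (Mapping V T), joinSet Ω Ω' ⊆ joinSet Ω' Ω := by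
    rintro Ω Ω' _ ⟨μ₁, h₁, μ₂, h₂, hc, rfl⟩
    exact ⟨μ₂, h₂, μ₁, h₁, hc.symm, hc.munion_comm⟩
  exact (key Ω₁ Ω₂).antisymm (key Ω₂ Ω₁)

theorem joinSet_assoc (Ω₁ Ω₂ Ω₃ : Set (Mapping V T)) :
    joinSet (joinSet Ω₁ Ω₂) Ω₃ = joinSet Ω₁ (joinSet Ω₂ Ω₃) := by
  ext μ
  constructor
  · rintro ⟨_, ⟨μ₁, h₁, μ₂, h₂, h₁₂, rfl⟩, μ₃, h₃, h₁₂₃, rfl⟩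
    obtain ⟨h₁₃, h₂₃⟩ := (compatible_munion_left_iff h₁₂).mp h₁₂₃
    exact ⟨μ₁, h₁, munion μ₂ μ₃, ⟨μ₂, h₂, μ₃, h₃, h₂₃, rfl⟩,
      (compatible_munion_right_iff h₂₃).mpr ⟨h₁₂, h₁₃⟩, munion_assoc μ₁ μ₂ μ₃⟩
  · rintro ⟨μ₁, h₁, _, ⟨μ₂, h₂, μ₃, h₃, h₂₃, rfl⟩, h₁₂₃, rfl⟩
    obtain ⟨h₁₂, h₁₃⟩ := (compatible_munion_right_iff h₂₃).mp h₁₂₃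
    exact ⟨munion μ₁ μ₂, ⟨μ₁, h₁, μ₂, h₂, h₁₂, rfl⟩, μ₃, h₃,
      (compatible_munion_left_iff h₁₂).mpr ⟨h₁₃, h₂₃⟩, (munion_assoc μ₁ μ₂ μ₃).symm⟩

end Join

/-- The join of solution-mapping sets is associative and commutative. -/
theorem joinSet_assoc_comm {V T : Type} (Ω₁ Ω₂ Ω₃ : Set (Mapping V T)) :
    joinSet Ω₁ (joinSet Ω₂ Ω₃) = joinSet (joinSet Ω₁ Ω₂) Ω₃ ∧
    joinSet Ω₁ Ω₂ = joinSet Ω₂ Ω₁ :=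
  ⟨(joinSet_assoc Ω₁ Ω₂ Ω₃).symm, joinSet_comm Ω₁ Ω₂⟩
end

section
/- For an exclusive group X (a set of triple patterns each having the single relevant source c_X in federation F), the evaluation of X over the graph of c_X equals the evaluation of X over the union of all federation graphs: ⟦X⟧_{ep(c_X)} = ⟦X⟧_{⋃_{c∈C} ep(c)}. -/
open scoped Classical in
/-- The relevant sources of the i-th triple pattern within federation C. -/
noncomputable def rSet {V T S : Type} {n : ℕ} (C : Finset S) (ep : S → RDFGraph T)
    (tp : Fin n → TP V T) (i : Fin n) : Finset S :=
  C.filter (fun c => evalTP (tp i) (ep c) ≠ ∅)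

/-! A mapping matches a triple pattern over the union of the federation graphs iff it matches
it over a single `ep c` with `c ∈ C`. Restricted to the variables of the pattern, it is then a
solution over `ep c`, so `c` is relevant and hence `c = c_X`; the converse holds since
`ep c_X` is part of the union. -/

section

variable {V T S : Type}

open scoped Classical in
noncomputable def restrictVars (μ : Mapping V T) (t : TP V T) : Mapping V T :=
  fun v => if varIn v t then μ v else none

theorem applyC_restrictVars (μ : Mapping V T) (t : TP V T) {x : V ⊕ T}
    (hx : ∀ v, x = Sum.inl v → varIn v t) : applyC (restrictVars μ t) x = applyC μ x := by
  cases x with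
  | inl v => simp [applyC, restrictVars, hx v rfl]
  | inr _ => rfl

theorem isSome_of_applyC_inl_eq_some {μ : Mapping V T} {v : V} {a : T}
    (h : applyC μ (Sum.inl v) = some a) : (μ v).isSome := by
  simp [show μ v = some a from h]

theorem matchesTP.isSome_of_varIn {μ : Mapping V T} {t : TP V T} {G : RDFGraph T}
    (h : matchesTP μ t G) {v : V} (hv : varIn v t) : (μ v).isSome := by
  obtain ⟨tr, -, hs, hp, ho⟩ := h
  rcases hv with e | e | e
  · exact isSome_of_applyC_inl_eq_some (e ▸ hs)
  · exact isSome_of_applyC_inl_eq_some (e ▸ hp)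
  · exact isSome_of_applyC_inl_eq_some (e ▸ ho)

theorem matchesTP.restrictVars {μ : Mapping V T} {t : TP V T} {G : RDFGraph T}
    (h : matchesTP μ t G) : matchesTP (restrictVars μ t) t G := by
  obtain ⟨tr, htr, hs, hp, ho⟩ := h
  refine ⟨tr, htr, ?_, ?_, ?_⟩
  · rwa [applyC_restrictVars _ _ fun v e => Or.inl e]
  · rwa [applyC_restrictVars _ _ fun v e => Or.inr (Or.inl e)]
  · rwa [applyC_restrictVars _ _ fun v e => Or.inr (Or.inr e)]

theorem restrictVars_mem_evalTP {μ : Mapping V T} {t : TP V T} {G : RDFGraph T}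
    (h : matchesTP μ t G) : restrictVars μ t ∈ evalTP t G := by
  refine ⟨fun v => ?_, h.restrictVars⟩
  by_cases hv : varIn v t
  · simp [restrictVars, hv, h.isSome_of_varIn hv]
  · simp [restrictVars, hv]

theorem evalTP_nonempty_iff_exists_matchesTP {t : TP V T} {G : RDFGraph T} :
    (evalTP t G).Nonempty ↔ ∃ μ, matchesTP μ t G :=
  ⟨fun ⟨μ, hμ⟩ => ⟨μ, hμ.2⟩, fun ⟨_, h⟩ => ⟨_, restrictVars_mem_evalTP h⟩⟩

theorem matchesTP_biUnion_iff {μ : Mapping V T} {t : TP V T} {C : Finset S}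
    {ep : S → RDFGraph T} :
    matchesTP μ t (⋃ c ∈ C, ep c) ↔ ∃ c ∈ C, matchesTP μ t (ep c) := by
  simp only [matchesTP, Set.mem_iUnion]
  grind

theorem mem_rSet_iff {n : ℕ} {C : Finset S} {ep : S → RDFGraph T} {tp : Fin n → TP V T}
    {i : Fin n} {c : S} :
    c ∈ rSet C ep tp i ↔ c ∈ C ∧ ∃ μ, matchesTP μ (tp i) (ep c) := by
  rw [rSet, Finset.mem_filter, ← evalTP_nonempty_iff_exists_matchesTP,
    Set.nonempty_iff_ne_empty]

theorem matchesTP_biUnion_iff_of_rSet_eq_singleton {n : ℕ} {C : Finset S}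
    {ep : S → RDFGraph T} {tp : Fin n → TP V T} {i : Fin n} {cX : S}
    (hi : rSet C ep tp i = {cX}) (μ : Mapping V T) :
    matchesTP μ (tp i) (⋃ c ∈ C, ep c) ↔ matchesTP μ (tp i) (ep cX) := by
  have hrel : ∀ c, c ∈ C ∧ (∃ μ, matchesTP μ (tp i) (ep c)) ↔ c = cX := fun c => by
    rw [← mem_rSet_iff, hi, Finset.mem_singleton]
  rw [matchesTP_biUnion_iff]
  constructor
  · rintro ⟨c, hc, h⟩
    rwa [← (hrel c).1 ⟨hc, μ, h⟩]
  · intro h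
    exact ⟨cX, ((hrel cX).2 rfl).1, h⟩

end

/-- For an exclusive group X (every triple pattern of X has the single relevant
source c_X), the evaluation of X over the graph of c_X equals the evaluation of X
over the union of all federation graphs. -/
theorem exclusive_group_eval {V T S : Type} {n : ℕ} (C : Finset S)
    (ep : S → RDFGraph T) (tp : Fin n → TP V T) (X : Finset (Fin n)) (cX : S)
    (hX : ∀ i ∈ X, rSet C ep tp i = {cX}) :
    evalBGP tp X (ep cX) = evalBGP tp X (⋃ c ∈ C, ep c) := by
  ext μ
  refine and_congr_right fun _ => forall₂_congr fun i hi => ?_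
  exact (matchesTP_biUnion_iff_of_rSet_eq_singleton (hX i hi) μ).symm
end
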